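/- arXiv:1503.02339 — 4 statements merged into one kernel-verified Lean document; each statement's English description precedes it below -/
import Mathlib

section
/- Let A be a complex M×N matrix, y ∈ ℂ^M, and μ > 0. Then the LASSO objective L(x) = ‖y − A x‖₂² + μ‖x‖₁ attains its global minimum, i.e., there exists x̂ ∈ ℂ^N with L(x̂) ≤ L(x) for all x ∈ ℂ^N. -/
/-! The objective is continuous and, for `μ > 0`, dominates `μ‖x‖`, so it tends to `+∞` away from
compact sets; on the finite-dimensional space `ℂᴺ` the extreme value theorem then gives a minimizer. -/

open Matrix

/-- The LASSO objective ‖y − A x‖₂² + μ‖x‖₁. -/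
noncomputable def lassoObj {M N : ℕ} (A : Matrix (Fin M) (Fin N) ℂ) (y : Fin M → ℂ) (μ : ℝ)
    (x : Fin N → ℂ) : ℝ :=
  ∑ i, ‖(y - A.mulVec x) i‖ ^ 2 + μ * ∑ i, ‖x i‖

theorem pi_norm_le_sum_norm_apply {ι : Type*} [Fintype ι] {E : ι → Type*}
    [∀ i, SeminormedAddGroup (E i)] (x : ∀ i, E i) : ‖x‖ ≤ ∑ i, ‖x i‖ :=
  (pi_norm_le_iff_of_nonneg (by positivity)).2 fun i =>
    Finset.single_le_sum (fun j _ => norm_nonneg (x j)) (Finset.mem_univ i)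

section Lasso

variable {M N : ℕ} (A : Matrix (Fin M) (Fin N) ℂ) (y : Fin M → ℂ)

theorem continuous_lassoObj (μ : ℝ) : Continuous (lassoObj A y μ) := by
  unfold lassoObj Matrix.mulVec dotProduct
  fun_prop

theorem mul_norm_le_lassoObj {μ : ℝ} (hμ : 0 ≤ μ) (x : Fin N → ℂ) :
    μ * ‖x‖ ≤ lassoObj A y μ x :=
  calc μ * ‖x‖ ≤ μ * ∑ i, ‖x i‖ := mul_le_mul_of_nonneg_left (pi_norm_le_sum_norm_apply x) hμ
    _ ≤ lassoObj A y μ x := le_add_of_nonneg_left (by positivity)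

theorem tendsto_lassoObj_cocompact {μ : ℝ} (hμ : 0 < μ) :
    Filter.Tendsto (lassoObj A y μ) (Filter.cocompact _) Filter.atTop :=
  Filter.tendsto_atTop_mono (mul_norm_le_lassoObj A y hμ.le)
    (tendsto_norm_cocompact_atTop.const_mul_atTop hμ)

end Lasso

theorem lasso_exists_minimizer {M N : ℕ} (A : Matrix (Fin M) (Fin N) ℂ) (y : Fin M → ℂ)
    (μ : ℝ) (hμ : 0 < μ) :
    ∃ xhat : Fin N → ℂ, ∀ x : Fin N → ℂ, lassoObj A y μ xhat ≤ lassoObj A y μ x :=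
  (continuous_lassoObj A y μ).exists_forall_le (tendsto_lassoObj_cocompact A y hμ)
end

section
/- Let A be a complex M×N matrix, y ∈ ℂ^M, and μ > 0. A vector x̂ ∈ ℂ^N is a global minimizer of the LASSO objective L(x) = ‖y − A x‖₂² + μ‖x‖₁ if and only if the beamformed residual r = 2·Aᴴ(y − A x̂) ∈ ℂ^N satisfies: for every index i, if x̂ᵢ ≠ 0 then rᵢ = μ·x̂ᵢ/|x̂ᵢ|, and if x̂ᵢ = 0 then |rᵢ| ≤ μ. -/
open Matrix

/-- The beamformed residual `r = 2 Aᴴ (y − A x̂)`. -/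
noncomputable def beamRes {M N : ℕ} (A : Matrix (Fin M) (Fin N) ℂ) (y : Fin M → ℂ)
    (xhat : Fin N → ℂ) : Fin N → ℂ :=
  (2 : ℂ) • Aᴴ.mulVec (y - A.mulVec xhat)

/-!
Expanding the square around `x̂` gives
`L(x̂ + h) = L(x̂) + ‖A h‖² + ∑ᵢ (μ (|x̂ᵢ + hᵢ| - |x̂ᵢ|) - Re (conj hᵢ rᵢ))`.
The stated condition says exactly that each `rᵢ` is a subgradient of `μ |·|` at `x̂ᵢ`, which makes
every summand nonnegative. Conversely, moving only the `i`-th coordinate by `w` shows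
`Re (conj w rᵢ) ≤ μ (|x̂ᵢ + w| - |x̂ᵢ|) + |w|² ∑ⱼ |Aⱼᵢ|²`, and the quadratic term disappears on scaling `w`
to zero, leaving the subgradient inequality.
-/

open Finset Filter Topology RealInnerProductSpace

section NormSubgradient

variable {E : Type*} [NormedAddCommGroup E] [InnerProductSpace ℝ E] {μ : ℝ} {z r : E}

/-- A quadratic error term does not affect a first-order optimality condition: the norm is convex,
so replacing `w` by `t • w` and letting `t → 0⁺` removes it. -/
theorem inner_le_of_forall_inner_le_add_sq (hμ : 0 ≤ μ) {C : ℝ}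
    (h : ∀ w, ⟪w, r⟫ ≤ μ * (‖z + w‖ - ‖z‖) + C * ‖w‖ ^ 2) (w : E) :
    ⟪w, r⟫ ≤ μ * (‖z + w‖ - ‖z‖) := by
  have hscaled : ∀ t ∈ Set.Ioo (0 : ℝ) 1,
      ⟪w, r⟫ ≤ μ * (‖z + w‖ - ‖z‖) + t * (C * ‖w‖ ^ 2) := by
    rintro t ⟨ht0, ht1⟩
    have hconv : ‖z + t • w‖ ≤ (1 - t) * ‖z‖ + t * ‖z + w‖ := by
      calc ‖z + t • w‖ = ‖(1 - t) • z + t • (z + w)‖ := by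
            congr 1; rw [smul_add, ← add_assoc, ← add_smul, sub_add_cancel, one_smul]
        _ ≤ (1 - t) * ‖z‖ + t * ‖z + w‖ := by
            refine (norm_add_le _ _).trans_eq ?_
            rw [norm_smul_of_nonneg (by linarith), norm_smul_of_nonneg ht0.le]
    have htw := h (t • w)
    rw [real_inner_smul_left, norm_smul_of_nonneg ht0.le] at htw
    have key : t * ⟪w, r⟫ ≤ t * (μ * (‖z + w‖ - ‖z‖) + t * (C * ‖w‖ ^ 2)) := by
      nlinarith [mul_le_mul_of_nonneg_left hconv hμ]
    exact le_of_mul_le_mul_left key ht0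
  have hlim : Tendsto (fun t : ℝ => μ * (‖z + w‖ - ‖z‖) + t * (C * ‖w‖ ^ 2)) (𝓝[>] 0)
      (𝓝 (μ * (‖z + w‖ - ‖z‖))) := by
    have : Continuous (fun t : ℝ => μ * (‖z + w‖ - ‖z‖) + t * (C * ‖w‖ ^ 2)) := by fun_prop
    simpa using this.continuousWithinAt.tendsto (x := 0) (s := Set.Ioi 0)
  exact ge_of_tendsto hlim (eventually_of_mem (Ioo_mem_nhdsGT one_pos) hscaled)

/-- The subdifferential of `μ ‖·‖` at `z`. -/
theorem forall_inner_le_norm_sub_iff (hμ : 0 ≤ μ) :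
    (∀ w, ⟪w, r⟫ ≤ μ * (‖z + w‖ - ‖z‖)) ↔
      (z ≠ 0 → r = (μ / ‖z‖) • z) ∧ (z = 0 → ‖r‖ ≤ μ) := by
  constructor
  · intro h
    have hr : ‖r‖ ≤ μ := by
      have hsq : ‖r‖ * ‖r‖ ≤ μ * ‖r‖ := by
        have hself := h r
        rw [real_inner_self_eq_norm_mul_norm] at hself
        nlinarith [norm_add_le z r]
      rcases (norm_nonneg r).eq_or_lt with h0 | hpos
      · rw [← h0]; exact hμ
      · exact le_of_mul_le_mul_right hsq hpos
    refine ⟨fun hz => ?_, fun _ => hr⟩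
    have hzpos : 0 < ‖z‖ := norm_pos_iff.mpr hz
    have hlow : μ * ‖z‖ ≤ ⟪z, r⟫ := by
      have hneg := h (-z)
      rw [add_neg_cancel, norm_zero, inner_neg_left] at hneg
      linarith
    have hup : ⟪z, r⟫ ≤ ‖z‖ * ‖r‖ := real_inner_le_norm z r
    have hnr : ‖r‖ = μ := by nlinarith
    have halign : ‖r‖ • z = ‖z‖ • r :=
      inner_eq_norm_mul_iff_real.mp (by nlinarith)
    rw [hnr] at halign
    rw [div_eq_inv_mul, mul_smul, halign, smul_smul, inv_mul_cancel₀ hzpos.ne', one_smul]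
  · rintro ⟨hne, hzero⟩ w
    rcases eq_or_ne z 0 with rfl | hz
    · simpa using (real_inner_le_norm w r).trans
        (mul_le_mul_of_nonneg_left (hzero rfl) (norm_nonneg w)) |>.trans_eq (mul_comm _ _)
    · have hzpos : 0 < ‖z‖ := norm_pos_iff.mpr hz
      rw [hne hz, real_inner_smul_right]
      have hcs : ⟪z + w, z⟫ ≤ ‖z + w‖ * ‖z‖ := real_inner_le_norm _ _
      rw [inner_add_left, real_inner_self_eq_norm_mul_norm] at hcs
      rw [div_mul_eq_mul_div, div_le_iff₀ hzpos]
      nlinarith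

end NormSubgradient

theorem sum_real_inner_eq_re_dotProduct {n : Type*} [Fintype n] (a b : n → ℂ) :
    ∑ i, ⟪a i, b i⟫ = (b ⬝ᵥ star a).re := by
  simp [dotProduct, Complex.inner, Complex.re_sum]

section Lasso

variable {M N : ℕ} (A : Matrix (Fin M) (Fin N) ℂ) (y : Fin M → ℂ) (μ : ℝ) (xhat : Fin N → ℂ)

theorem sum_real_inner_beamRes (h : Fin N → ℂ) :
    ∑ i, ⟪h i, beamRes A y xhat i⟫ = 2 * ∑ j, ⟪(A *ᵥ h) j, (y - A *ᵥ xhat) j⟫ := by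
  have hadj : star h ⬝ᵥ Aᴴ *ᵥ (y - A *ᵥ xhat) = star (A *ᵥ h) ⬝ᵥ (y - A *ᵥ xhat) := by
    rw [dotProduct_mulVec, star_mulVec]
  rw [sum_real_inner_eq_re_dotProduct, sum_real_inner_eq_re_dotProduct, beamRes, dotProduct_comm,
    dotProduct_smul, hadj, dotProduct_comm, smul_eq_mul]
  simp [Complex.mul_re]

theorem lassoObj_add (h : Fin N → ℂ) :
    lassoObj A y μ (xhat + h) = lassoObj A y μ xhat + ∑ j, ‖(A *ᵥ h) j‖ ^ 2 +
      ∑ i, (μ * (‖xhat i + h i‖ - ‖xhat i‖) - ⟪h i, beamRes A y xhat i⟫) := by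
  have hres : y - A *ᵥ (xhat + h) = (y - A *ᵥ xhat) - A *ᵥ h := by rw [mulVec_add]; abel
  rw [lassoObj, lassoObj, hres]
  simp only [Pi.sub_apply, Pi.add_apply, norm_sub_sq_real, sum_real_inner_beamRes,
    sum_add_distrib, sum_sub_distrib, mul_sum, mul_sub, real_inner_comm]
  ring

theorem lassoObj_add_single (i : Fin N) (w : ℂ) :
    lassoObj A y μ (xhat + Pi.single i w) = lassoObj A y μ xhat + ‖w‖ ^ 2 * ∑ j, ‖A j i‖ ^ 2 +
      (μ * (‖xhat i + w‖ - ‖xhat i‖) - ⟪w, beamRes A y xhat i⟫) := by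
  rw [lassoObj_add, Fintype.sum_eq_single i fun k hk => by simp [hk]]
  simp [mul_sum, mul_comm, mul_pow]

end Lasso

/-- Global optimality condition for the LASSO: `x̂` is a global minimizer iff the
beamformed residual satisfies `rᵢ = μ x̂ᵢ/|x̂ᵢ|` on the support of `x̂` and `|rᵢ| ≤ μ`
off the support. -/
theorem lasso_optimality_iff {M N : ℕ} (A : Matrix (Fin M) (Fin N) ℂ) (y : Fin M → ℂ)
    (μ : ℝ) (hμ : 0 < μ) (xhat : Fin N → ℂ) :
    (∀ x : Fin N → ℂ, lassoObj A y μ xhat ≤ lassoObj A y μ x) ↔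
      (∀ i : Fin N,
        (xhat i ≠ 0 → beamRes A y xhat i = (μ : ℂ) * xhat i / (‖xhat i‖ : ℂ)) ∧
        (xhat i = 0 → ‖beamRes A y xhat i‖ ≤ μ)) := by
  have hsmul (z : ℂ) : (μ / ‖z‖) • z = (μ : ℂ) * z / (‖z‖ : ℂ) := by
    rw [Complex.real_smul, Complex.ofReal_div]; ring
  simp only [← hsmul, ← forall_inner_le_norm_sub_iff hμ.le]
  constructor
  · intro hmin i
    refine inner_le_of_forall_inner_le_add_sq hμ.le (C := ∑ j, ‖A j i‖ ^ 2) fun w => ?_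
    have hmin_i := hmin (xhat + Pi.single i w)
    rw [lassoObj_add_single] at hmin_i
    linarith
  · intro hsub x
    have hexp := lassoObj_add A y μ xhat (x - xhat)
    rw [add_sub_cancel] at hexp
    have hquad : 0 ≤ ∑ j, ‖(A *ᵥ (x - xhat)) j‖ ^ 2 := by positivity
    have hlin : 0 ≤ ∑ i, (μ * (‖xhat i + (x - xhat) i‖ - ‖xhat i‖) -
        ⟪(x - xhat) i, beamRes A y xhat i⟫) :=
      sum_nonneg fun i _ => sub_nonneg.mpr (hsub i _)
    linarith
end

section
/- Let A be a complex M×N matrix, y ∈ ℂ^M, and μ > 0. If x̂ ∈ ℂ^N is a global minimizer of the LASSO objective L(x) = ‖y − A x‖₂² + μ‖x‖₁, then with r = 2·Aᴴ(y − A x̂) one has Σᵢ conj(x̂ᵢ)·rᵢ = μ‖x̂‖₁ (an equality of complex numbers, the right-hand side being real). -/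
/-!
Scaling `x̂` by `1 + t w` (`t` real, `w` complex) turns the `ℓ₁` term into `‖1 + t w‖ ‖x̂‖₁`,
which is differentiable at `t = 0` although `‖·‖₁` is not. At a minimizer the derivative along
this ray vanishes, so `2 Re (conj w ⟪A x̂, y - A x̂⟫) = μ (Re w) ‖x̂‖₁` for every `w`; taking
`w = 1` and `w = i` gives `⟪A x̂, y - A x̂⟫ = μ ‖x̂‖₁ / 2`, and `⟪x̂, r⟫ = 2 ⟪A x̂, y - A x̂⟫`
(here `⟪u, v⟫ = ∑ conj uᵢ vᵢ`, written `star u ⬝ᵥ v` below).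
-/

open Matrix

open scoped ComplexConjugate InnerProductSpace

theorem HasDerivAt.norm {F : Type*} [NormedAddCommGroup F] [InnerProductSpace ℝ F]
    {f : ℝ → F} {f' : F} {x : ℝ} (hf : HasDerivAt f f' x) (h0 : f x ≠ 0) :
    HasDerivAt (‖f ·‖) (⟪f x, f'⟫_ℝ / ‖f x‖) x := by
  have h := hf.norm_sq.sqrt (by positivity)
  simp only [Real.sqrt_sq (norm_nonneg _)] at h
  convert h using 1
  field_simp

theorem hasDerivAt_norm_one_add_mul (w : ℂ) :
    HasDerivAt (fun t : ℝ => ‖1 + t * w‖) w.re 0 := by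
  have h : HasDerivAt (fun t : ℝ => 1 + (t : ℂ) * w) w 0 := by
    simpa using ((hasDerivAt_id (0 : ℝ)).ofReal_comp.mul_const w).const_add 1
  simpa [Complex.inner] using h.norm (by simp)

theorem hasDerivAt_sum_norm_sub_mul_sq {ι : Type*} [Fintype ι] (r u : ι → ℂ) :
    HasDerivAt (fun t : ℝ => ∑ i, ‖r i - t * u i‖ ^ 2) (-2 * (star u ⬝ᵥ r).re) 0 := by
  have h (i : ι) :
      HasDerivAt (fun t : ℝ => ‖r i - t * u i‖ ^ 2) (-2 * (star (u i) * r i).re) 0 := by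
    have hi : HasDerivAt (fun t : ℝ => r i - (t : ℂ) * u i) (-u i) 0 := by
      simpa using ((hasDerivAt_id (0 : ℝ)).ofReal_comp.mul_const (u i)).const_sub (r i)
    convert hi.norm_sq using 1
    simp only [Complex.ofReal_zero, zero_mul, sub_zero, inner_neg_right, Complex.inner,
      RCLike.star_def, Complex.mul_re, Complex.conj_re, Complex.conj_im]
    ring
  refine (HasDerivAt.fun_sum fun i _ => h i).congr_deriv ?_
  simp only [dotProduct, Pi.star_apply, Complex.re_sum, Finset.mul_sum]

theorem Complex.eq_ofReal_of_forall_re_conj_mul {z : ℂ} {a : ℝ}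
    (h : ∀ w : ℂ, (conj w * z).re = a * w.re) : z = a :=
  Complex.ext (by simpa using h 1) (by simpa using h I)

section Lasso

variable {M N : ℕ} (A : Matrix (Fin M) (Fin N) ℂ) (y : Fin M → ℂ) (μ : ℝ) (x : Fin N → ℂ)

theorem lassoObj_one_add_smul (c : ℂ) :
    lassoObj A y μ ((1 + c) • x) =
      ∑ i, ‖(y - A *ᵥ x) i - c * (A *ᵥ x) i‖ ^ 2 + μ * (‖1 + c‖ * ∑ i, ‖x i‖) := by
  simp only [lassoObj, mulVec_smul, Pi.sub_apply, Pi.smul_apply, smul_eq_mul, norm_mul,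
    Finset.mul_sum]
  congr 2 with i
  ring_nf

theorem hasDerivAt_lassoObj_one_add_mul_smul (w : ℂ) :
    HasDerivAt (fun t : ℝ => lassoObj A y μ ((1 + t * w) • x))
      (-2 * (conj w * (star (A *ᵥ x) ⬝ᵥ (y - A *ᵥ x))).re + μ * (w.re * ∑ i, ‖x i‖)) 0 := by
  simp only [lassoObj_one_add_smul, mul_assoc]
  have h := (hasDerivAt_sum_norm_sub_mul_sq (y - A *ᵥ x) (w • A *ᵥ x)).fun_add
    (((hasDerivAt_norm_one_add_mul w).mul_const (∑ i, ‖x i‖)).const_mul μ)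
  simp only [star_smul, smul_dotProduct, Pi.smul_apply, smul_eq_mul, Complex.star_def] at h
  exact h

variable {A y μ x} in
theorem two_mul_re_conj_mul_dotProduct_eq_of_forall_le
    (hmin : ∀ x', lassoObj A y μ x ≤ lassoObj A y μ x') (w : ℂ) :
    2 * (conj w * (star (A *ᵥ x) ⬝ᵥ (y - A *ᵥ x))).re = μ * (w.re * ∑ i, ‖x i‖) := by
  have hloc : IsLocalMin (fun t : ℝ => lassoObj A y μ ((1 + t * w) • x)) 0 :=
    Filter.Eventually.of_forall fun t => by simpa using hmin _
  have := hloc.hasDerivAt_eq_zero (hasDerivAt_lassoObj_one_add_mul_smul A y μ x w)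
  linarith

theorem sum_conj_mul_beamRes :
    ∑ i, conj (x i) * beamRes A y x i = 2 * (star (A *ᵥ x) ⬝ᵥ (y - A *ᵥ x)) := by
  change star x ⬝ᵥ beamRes A y x = _
  rw [beamRes, dotProduct_smul, dotProduct_mulVec, star_mulVec, smul_eq_mul]

end Lasso

theorem lasso_residual_inner_general {M N : ℕ} (A : Matrix (Fin M) (Fin N) ℂ) (y : Fin M → ℂ)
    (μ : ℝ) (xhat : Fin N → ℂ)
    (hmin : ∀ x : Fin N → ℂ, lassoObj A y μ xhat ≤ lassoObj A y μ x) :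
    ∑ i, (starRingEnd ℂ) (xhat i) * beamRes A y xhat i
      = ((μ * ∑ i, ‖xhat i‖ : ℝ) : ℂ) := by
  have hpair : star (A *ᵥ xhat) ⬝ᵥ (y - A *ᵥ xhat) = ((μ / 2 * ∑ i, ‖xhat i‖ : ℝ) : ℂ) :=
    Complex.eq_ofReal_of_forall_re_conj_mul fun w => by
      linarith [two_mul_re_conj_mul_dotProduct_eq_of_forall_le hmin w]
  rw [sum_conj_mul_beamRes, hpair]
  push_cast
  ring

/-- At a global LASSO minimizer, `Σᵢ conj(x̂ᵢ) rᵢ = μ ‖x̂‖₁`. -/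
theorem lasso_residual_inner {M N : ℕ} (A : Matrix (Fin M) (Fin N) ℂ) (y : Fin M → ℂ)
    (μ : ℝ) (hμ : 0 < μ) (xhat : Fin N → ℂ)
    (hmin : ∀ x : Fin N → ℂ, lassoObj A y μ xhat ≤ lassoObj A y μ x) :
    ∑ i, (starRingEnd ℂ) (xhat i) * beamRes A y xhat i
      = ((μ * ∑ i, ‖xhat i‖ : ℝ) : ℂ) :=
  lasso_residual_inner_general A y μ xhat hmin
end

section
/- Let A be a complex M×N matrix, Y a complex M×L matrix, and μ ≥ 0. The zero matrix is a global minimizer of the multiple-snapshot objective G(X) = ‖Y − A X‖_F² + μ·Σᵢ ‖Xᵢ·‖₂ if and only if μ ≥ 2·maxᵢ ‖(Aᴴ Y)ᵢ·‖₂, i.e., twice the largest Euclidean row norm of Aᴴ Y. -/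
/-!
Expanding the square, `G(X) - G(0) = ‖A X‖_F² - 2 Re ⟨Aᴴ Y, X⟩_F + μ Σᵢ ‖Xᵢ·‖₂`. Along a ray
`t • D` the quadratic term is `O(t²)`, so `0` is a minimizer iff the linear part is nonnegative in
every direction, i.e. iff `Re ⟨Aᴴ Y, D⟩_F ≤ (μ/2) Σᵢ ‖Dᵢ·‖₂` for all `D`. This says that the dual
norm of the row-sum norm `Σᵢ ‖Dᵢ·‖₂`, namely the largest row norm, is at most `μ/2`: row-wise
Cauchy–Schwarz gives one direction, and `D` equal to a single row of `Aᴴ Y` the other.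
-/

open Matrix

/-- The multiple-snapshot (mixed-norm) LASSO objective ‖Y − A X‖_F² + μ Σᵢ ‖Xᵢ·‖₂. -/
noncomputable def msObj {M N L : ℕ} (A : Matrix (Fin M) (Fin N) ℂ)
    (Y : Matrix (Fin M) (Fin L) ℂ) (μ : ℝ) (X : Matrix (Fin N) (Fin L) ℂ) : ℝ :=
  (∑ i, ∑ j, ‖(Y - A * X) i j‖ ^ 2) + μ * ∑ i, Real.sqrt (∑ j, ‖X i j‖ ^ 2)

lemma nonneg_of_forall_pos_sq_mul_add_mul_nonneg {b c : ℝ}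
    (h : ∀ t > 0, 0 ≤ t ^ 2 * c + t * b) : 0 ≤ b := by
  have hlin : ∀ t > 0, 0 ≤ t * c + b := fun t ht =>
    nonneg_of_mul_nonneg_right (by linear_combination h t ht) ht
  have hcont : Continuous fun t : ℝ => t * c + b := by fun_prop
  have hlim := (hcont.tendsto' 0 b (by simp)).mono_left (nhdsWithin_le_nhds (s := Set.Ioi 0))
  exact ge_of_tendsto hlim (eventually_nhdsWithin_of_forall hlin)

namespace Matrix

variable {𝕜 m n : Type*} [RCLike 𝕜] [Fintype n]

noncomputable def rowNorm (X : Matrix m n 𝕜) (i : m) : ℝ := √(∑ j, ‖X i j‖ ^ 2)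

lemma rowNorm_eq_norm (X : Matrix m n 𝕜) (i : m) :
    X.rowNorm i = ‖WithLp.toLp 2 (X i)‖ := by
  rw [EuclideanSpace.norm_eq]
  rfl

lemma rowNorm_nonneg (X : Matrix m n 𝕜) (i : m) : 0 ≤ X.rowNorm i :=
  Real.sqrt_nonneg _

lemma rowNorm_smul (t : 𝕜) (X : Matrix m n 𝕜) (i : m) :
    (t • X).rowNorm i = ‖t‖ * X.rowNorm i := by
  rw [rowNorm_eq_norm, rowNorm_eq_norm, ← norm_smul, ← WithLp.toLp_smul]
  rfl

variable [Fintype m]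

lemma trace_conjTranspose_mul (P Q : Matrix m n 𝕜) :
    trace (Pᴴ * Q) = ∑ i, inner 𝕜 (WithLp.toLp 2 (P i)) (WithLp.toLp 2 (Q i)) := by
  simp only [trace, diag, mul_apply, conjTranspose_apply, EuclideanSpace.inner_toLp_toLp,
    dotProduct, Pi.star_apply, mul_comm (Q _ _)]
  exact Finset.sum_comm

lemma sum_norm_sq_sub (P Q : Matrix m n 𝕜) :
    ∑ i, ∑ j, ‖(P - Q) i j‖ ^ 2 =
      ∑ i, ∑ j, ‖P i j‖ ^ 2 - 2 * RCLike.re (trace (Pᴴ * Q)) + ∑ i, ∑ j, ‖Q i j‖ ^ 2 := by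
  simp only [sub_apply, norm_sub_sq (𝕜 := 𝕜), RCLike.inner_apply, trace_conjTranspose_mul,
    EuclideanSpace.inner_toLp_toLp, dotProduct, Pi.star_apply, RCLike.star_def, map_sum,
    Finset.sum_add_distrib, Finset.sum_sub_distrib, Finset.mul_sum]

lemma re_trace_conjTranspose_mul_le (P Q : Matrix m n 𝕜) :
    RCLike.re (trace (Pᴴ * Q)) ≤ ∑ i, P.rowNorm i * Q.rowNorm i := by
  rw [trace_conjTranspose_mul, map_sum]
  gcongr with i
  simpa only [rowNorm_eq_norm] using re_inner_le_norm _ _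

section updateRow

variable [DecidableEq m]

lemma re_trace_conjTranspose_mul_updateRow_zero (B : Matrix m n 𝕜) (i : m) :
    RCLike.re (trace (Bᴴ * updateRow 0 i (B i))) = B.rowNorm i ^ 2 := by
  rw [trace_conjTranspose_mul,
    Finset.sum_eq_single i (fun k _ hk => by rw [updateRow_ne hk]; exact inner_zero_right _)
      (by simp),
    updateRow_self, rowNorm_eq_norm, inner_self_eq_norm_sq]

lemma sum_rowNorm_updateRow_zero (B : Matrix m n 𝕜) (i : m) :
    ∑ k, (updateRow 0 i (B i)).rowNorm k = B.rowNorm i := by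
  rw [Finset.sum_eq_single i (fun k _ hk => by simp [rowNorm, updateRow_ne hk]) (by simp),
    rowNorm, updateRow_self]
  rfl

end updateRow

theorem re_trace_conjTranspose_mul_le_iff {B : Matrix m n 𝕜} {c : ℝ} (hc : 0 ≤ c) :
    (∀ D : Matrix m n 𝕜, RCLike.re (trace (Bᴴ * D)) ≤ c * ∑ i, D.rowNorm i) ↔
      ∀ i, B.rowNorm i ≤ c := by
  classical
  constructor
  · intro h i
    have hi := h (updateRow 0 i (B i))
    rw [re_trace_conjTranspose_mul_updateRow_zero, sum_rowNorm_updateRow_zero] at hi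
    rcases (B.rowNorm_nonneg i).eq_or_lt with h0 | hpos
    · rw [← h0]
      exact hc
    · nlinarith
  · intro h D
    calc RCLike.re (trace (Bᴴ * D)) ≤ ∑ i, B.rowNorm i * D.rowNorm i :=
          re_trace_conjTranspose_mul_le B D
      _ ≤ ∑ i, c * D.rowNorm i := by gcongr with i; exacts [D.rowNorm_nonneg i, h i]
      _ = c * ∑ i, D.rowNorm i := (Finset.mul_sum ..).symm

end Matrix

section

variable {M N L : ℕ} (A : Matrix (Fin M) (Fin N) ℂ) (Y : Matrix (Fin M) (Fin L) ℂ) (μ : ℝ)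

lemma msObj_sub_msObj_zero (X : Matrix (Fin N) (Fin L) ℂ) :
    msObj A Y μ X - msObj A Y μ 0 = ∑ i, ∑ j, ‖(A * X) i j‖ ^ 2
      - 2 * RCLike.re (trace ((Aᴴ * Y)ᴴ * X)) + μ * ∑ i, X.rowNorm i := by
  have hadj : (Aᴴ * Y)ᴴ * X = Yᴴ * (A * X) := by
    rw [conjTranspose_mul, conjTranspose_conjTranspose, Matrix.mul_assoc]
  simp only [msObj, Matrix.mul_zero, sub_zero, sum_norm_sq_sub Y (A * X), hadj, Matrix.zero_apply,
    norm_zero, zero_pow two_ne_zero, Finset.sum_const_zero, Real.sqrt_zero, mul_zero, add_zero,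
    rowNorm]
  ring

theorem msObj_zero_le_iff :
    (∀ X, msObj A Y μ 0 ≤ msObj A Y μ X) ↔
      ∀ D : Matrix (Fin N) (Fin L) ℂ,
        RCLike.re (trace ((Aᴴ * Y)ᴴ * D)) ≤ μ / 2 * ∑ i, D.rowNorm i := by
  constructor
  · intro h D
    suffices 0 ≤ μ * ∑ i, D.rowNorm i - 2 * RCLike.re (trace ((Aᴴ * Y)ᴴ * D)) by linarith
    refine nonneg_of_forall_pos_sq_mul_add_mul_nonneg (c := ∑ i, ∑ j, ‖(A * D) i j‖ ^ 2)
      fun t ht => ?_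
    have hray := msObj_sub_msObj_zero A Y μ ((t : ℂ) • D)
    simp only [Matrix.mul_smul, Matrix.smul_apply, smul_eq_mul, norm_mul, Complex.norm_real,
      Real.norm_of_nonneg ht.le, rowNorm_smul, trace_smul, RCLike.re_to_complex,
      Complex.re_ofReal_mul, mul_pow, ← Finset.mul_sum] at hray
    rw [RCLike.re_to_complex]
    linarith [h ((t : ℂ) • D)]
  · intro h X
    have hquad : 0 ≤ ∑ i, ∑ j, ‖(A * X) i j‖ ^ 2 := by positivity
    linarith [msObj_sub_msObj_zero A Y μ X, h X]

end

/-- The zero matrix is a global minimizer of the multiple-snapshot LASSO objective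
iff `μ ≥ 2 maxᵢ ‖(Aᴴ Y)ᵢ·‖₂`. -/
theorem ms_zero_minimizer_iff {M N L : ℕ} (A : Matrix (Fin M) (Fin N) ℂ)
    (Y : Matrix (Fin M) (Fin L) ℂ) (μ : ℝ) (hμ : 0 ≤ μ) :
    (∀ X : Matrix (Fin N) (Fin L) ℂ, msObj A Y μ 0 ≤ msObj A Y μ X) ↔
      2 * (⨆ i : Fin N, Real.sqrt (∑ j, ‖(Aᴴ * Y) i j‖ ^ 2)) ≤ μ := by
  have hμ2 : 0 ≤ μ / 2 := by positivity
  change _ ↔ 2 * (⨆ i, (Aᴴ * Y).rowNorm i) ≤ μ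
  rw [msObj_zero_le_iff, re_trace_conjTranspose_mul_le_iff hμ2, ← le_div_iff₀' two_pos]
  exact ⟨fun h => Real.iSup_le h hμ2, fun h i => (le_ciSup (Finite.bddAbove_range _) i).trans h⟩
end
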